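/- Let G be a finite group and V a finite-dimensional representation of G over a field k. If A ⊆ k[V]^G is a graded geometric separating algebra, then the ring extension A ⊆ k[V]^G is integral and A is a finitely generated k-algebra. -/

import Mathlib

open MvPolynomial

section Common

variable {k : Type*} [Field k] {G : Type*} [Group G]
variable {ι : Type*} [Fintype ι] [DecidableEq ι]

/-- The `k`-algebra endomorphism of `k[V] = k[Xᵢ : i ∈ ι]` induced by `σ ∈ G` acting on
`V = ι → k` via the representation `ρ`:  `(σ • f)(v) = f (σ⁻¹ • v)`. -/
noncomputable def polyAct (ρ : Representation k G (ι → k)) (σ : G) :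
    MvPolynomial ι k →ₐ[k] MvPolynomial ι k :=
  aeval fun i => ∑ j, C (ρ σ⁻¹ (Pi.single j (1 : k)) i) * X j

/-- The ring of invariants `k[V]^G`, as a subalgebra of `k[V]`. -/
noncomputable def invariantRing (ρ : Representation k G (ι → k)) :
    Subalgebra k (MvPolynomial ι k) :=
  ⨅ σ : G, AlgHom.equalizer (polyAct ρ σ) (AlgHom.id k (MvPolynomial ι k))

/-- A subalgebra of `k[V]` is graded if it contains all homogeneous components
of its elements. -/
def IsGradedSubalgebra (A : Subalgebra k (MvPolynomial ι k)) : Prop :=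
  ∀ f ∈ A, ∀ d : ℕ, homogeneousComponent d f ∈ A

/-- A geometric separating algebra (testing separation on points with coordinates
in the extension field `K`): a subalgebra of the invariant ring which separates every
pair of `K`-points that the full invariant ring separates. -/
def IsGeomSeparatingAlgebraAt (K : Type*) [CommSemiring K] [Algebra k K]
    (ρ : Representation k G (ι → k)) (A : Subalgebra k (MvPolynomial ι k)) : Prop :=
  A ≤ invariantRing ρ ∧
    ∀ u v : ι → K,
      (∀ f ∈ A, aeval u f = aeval v f) →
        ∀ f ∈ invariantRing ρ, aeval u f = aeval v f

/-- A geometric separating algebra: separation is tested on points over an algebraic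
closure of `k`. -/
def IsGeomSeparatingAlgebra (ρ : Representation k G (ι → k))
    (A : Subalgebra k (MvPolynomial ι k)) : Prop :=
  IsGeomSeparatingAlgebraAt (AlgebraicClosure k) ρ A

/-- `rs` is a regular sequence on the commutative ring `R`: each entry is a
nonzerodivisor modulo the ideal generated by the previous ones, and the entries
generate a proper ideal. -/
def IsRegSeq (R : Type*) [CommRing R] (rs : List R) : Prop :=
  (∀ (i : ℕ) (h : i < rs.length) (y : R),
      rs.get ⟨i, h⟩ * y ∈ Ideal.span {x | x ∈ rs.take i} →
        y ∈ Ideal.span {x | x ∈ rs.take i}) ∧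
    Ideal.span {x | x ∈ rs} ≠ ⊤

/-- The depth of (the ideal generated by) a subset `S` of a commutative ring `R`:
the supremum of the lengths of regular sequences consisting of elements of `S`. -/
noncomputable def depthIn (R : Type*) [CommRing R] (S : Set R) : ℕ∞ :=
  ⨆ rs ∈ {rs : List R | (∀ x ∈ rs, x ∈ S) ∧ IsRegSeq R rs}, (rs.length : ℕ∞)

/-- The maximal homogeneous ideal `A₊` of a graded subalgebra of `k[V]`,
as a subset of `A` (elements with vanishing constant term). -/
def augSet (A : Subalgebra k (MvPolynomial ι k)) : Set A :=
  {a | constantCoeff (a : MvPolynomial ι k) = 0}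

/-- The depth of a graded subalgebra `A` of `k[V]`: `depth_A(A₊)`. -/
noncomputable def gDepth (A : Subalgebra k (MvPolynomial ι k)) : ℕ∞ :=
  depthIn A (augSet A)

/-- A graded subalgebra of `k[V]` is Cohen-Macaulay if its depth equals its
Krull dimension. -/
def IsCohenMacaulaySubalgebra (A : Subalgebra k (MvPolynomial ι k)) : Prop :=
  (gDepth A : WithBot ℕ∞) = ringKrullDim A

/-- The Cohen-Macaulay defect `dim A - depth A` of `A` is at least `c`. -/
def cmdefAtLeast (A : Subalgebra k (MvPolynomial ι k)) (c : ℕ) : Prop :=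
  (gDepth A : WithBot ℕ∞) + (c : ℕ∞) ≤ ringKrullDim A

end Common

/-! If `A` separates orbits, a point `u ∈ V̄` at which every element of `A₊` vanishes has the
same invariants as `0`. The orbit polynomial `∏_σ (T - σ • Xᵢ)` has invariant coefficients and
vanishes at `Xᵢ`, so evaluating at `u` gives `uᵢ ^ |G| = 0`: the null cone of `A` is `{0}`. By the
Nullstellensatz some power `Xᵢ ^ mᵢ` lies in the ideal `A₊ k[V]`, and as `A` is graded, taking the
homogeneous component of degree `mᵢ` writes `Xᵢ ^ mᵢ` as an `A`-combination of polynomials of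
lower degree. By induction on the degree, the monomials with exponents `eᵢ < mᵢ` generate `k[V]`
as an `A`-module. So `k[V]` is a finite `A`-module, which gives integrality, and `A` is finitely
generated by the Artin–Tate lemma. -/

section InvariantRing

variable {k : Type*} [Field k] {G : Type*} [Group G] {ι : Type*} [Fintype ι] [DecidableEq ι]
  (ρ : Representation k G (ι → k))

lemma polyAct_X (σ : G) (i : ι) :
    polyAct ρ σ (X i) = ∑ j, C (LinearMap.toMatrix' (ρ σ⁻¹) i j) * X j := by
  simp [polyAct, LinearMap.toMatrix'_apply]

lemma polyAct_one_X (i : ι) : polyAct ρ 1 (X i) = X i := by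
  simp [polyAct_X, Pi.single_apply]

lemma polyAct_polyAct (τ σ : G) (f : MvPolynomial ι k) :
    polyAct ρ τ (polyAct ρ σ f) = polyAct ρ (τ * σ) f := by
  have hmat : LinearMap.toMatrix' (ρ (τ * σ)⁻¹) =
      LinearMap.toMatrix' (ρ σ⁻¹) * LinearMap.toMatrix' (ρ τ⁻¹) := by
    rw [mul_inv_rev, map_mul, Module.End.mul_eq_comp, LinearMap.toMatrix'_comp]
  rw [← AlgHom.comp_apply]
  congr 1
  refine algHom_ext fun i => ?_
  rw [AlgHom.comp_apply, polyAct_X, polyAct_X, hmat, map_sum]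
  simp only [map_mul, algHom_C, polyAct_X, Matrix.mul_apply, map_sum, Finset.mul_sum,
    Finset.sum_mul, algebraMap_eq, mul_assoc]
  exact Finset.sum_comm

lemma mem_invariantRing_iff {f : MvPolynomial ι k} :
    f ∈ invariantRing ρ ↔ ∀ σ : G, polyAct ρ σ f = f := by
  rw [invariantRing, Algebra.mem_iInf]
  exact forall_congr' fun σ => AlgHom.mem_equalizer _ _ _

section OrbitPoly

variable [Fintype G]

noncomputable def orbitPoly (i : ι) : Polynomial (MvPolynomial ι k) :=
  ∏ σ : G, (Polynomial.X - Polynomial.C (polyAct ρ σ (X i)))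

lemma orbitPoly_map_polyAct (τ : G) (i : ι) :
    (orbitPoly ρ i).map (polyAct ρ τ).toRingHom = orbitPoly ρ i := by
  simp only [orbitPoly, Polynomial.map_prod, Polynomial.map_sub, Polynomial.map_X,
    Polynomial.map_C, AlgHom.toRingHom_eq_coe, RingHom.coe_coe, polyAct_polyAct]
  exact Fintype.prod_equiv (Equiv.mulLeft τ) _ _ fun σ => rfl

lemma orbitPoly_coeff_mem_invariantRing (i : ι) (n : ℕ) :
    (orbitPoly ρ i).coeff n ∈ invariantRing ρ :=
  (mem_invariantRing_iff ρ).2 fun τ => by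
    simpa using congrArg (Polynomial.coeff · n) (orbitPoly_map_polyAct ρ τ i)

lemma orbitPoly_eval_X (i : ι) : (orbitPoly ρ i).eval (X i) = 0 := by
  rw [orbitPoly, Polynomial.eval_prod]
  exact Finset.prod_eq_zero (Finset.mem_univ 1) (by simp [polyAct_one_X])

lemma orbitPoly_map_aeval_zero {K : Type*} [CommRing K] [Algebra k K] (i : ι) :
    (orbitPoly ρ i).map (aeval (0 : ι → K)).toRingHom = Polynomial.X ^ Fintype.card G := by
  have hzero (σ : G) : aeval (0 : ι → K) (polyAct ρ σ (X i)) = 0 := by simp [polyAct_X]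
  simp [orbitPoly, Polynomial.map_prod, hzero]

end OrbitPoly

lemma eq_zero_of_forall_mem_invariantRing_aeval_eq [Finite G] {K : Type*} [CommRing K]
    [IsReduced K] [Algebra k K] {u : ι → K}
    (hu : ∀ f ∈ invariantRing ρ, aeval u f = aeval 0 f) : u = 0 := by
  cases nonempty_fintype G
  funext i
  have hmap : (orbitPoly ρ i).map (aeval u).toRingHom =
      (orbitPoly ρ i).map (aeval 0).toRingHom :=
    Polynomial.ext fun n => by simpa using hu _ (orbitPoly_coeff_mem_invariantRing ρ i n)
  have hpow : u i ^ Fintype.card G = 0 :=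
    calc u i ^ Fintype.card G
        = ((orbitPoly ρ i).map (aeval 0).toRingHom).eval (u i) := by
          rw [orbitPoly_map_aeval_zero]; simp
      _ = aeval u ((orbitPoly ρ i).eval (X i)) := by
          rw [← hmap, Polynomial.eval_map, ← aeval_X (R := k) u i]
          exact Polynomial.eval₂_at_apply _ _
      _ = 0 := by rw [orbitPoly_eval_X, map_zero]
  exact IsReduced.eq_zero _ ⟨_, hpow⟩

lemma IsGeomSeparatingAlgebraAt.eq_zero_of_forall_aeval_eq_zero [Finite G] {K : Type*}
    [CommRing K] [IsReduced K] [Algebra k K] {ρ : Representation k G (ι → k)}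
    {A : Subalgebra k (MvPolynomial ι k)} (hsep : IsGeomSeparatingAlgebraAt K ρ A) {u : ι → K}
    (hu : ∀ g ∈ A, constantCoeff g = 0 → aeval u g = 0) : u = 0 := by
  refine eq_zero_of_forall_mem_invariantRing_aeval_eq ρ (hsep.2 u 0 fun g hg => ?_)
  have hg₀ : g - C (constantCoeff g) ∈ A := A.sub_mem hg (A.algebraMap_mem _)
  have := hu _ hg₀ (by simp)
  rw [map_sub, aeval_C, sub_eq_zero] at this
  rw [this, aeval_zero]

end InvariantRing

lemma exists_pow_X_mem_of_zeroLocus_subset_zero {k K σ : Type*} [Field k] [Field K]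
    [Algebra k K] [IsAlgClosed K] [Finite σ] {I : Ideal (MvPolynomial σ k)}
    (hI : zeroLocus K I ⊆ {0}) (i : σ) : ∃ m, (X i : MvPolynomial σ k) ^ m ∈ I := by
  change X i ∈ I.radical
  rw [← vanishingIdeal_zeroLocus_eq_radical (K := K), mem_vanishingIdeal_iff]
  intro u hu
  rw [hI hu, aeval_X, Pi.zero_apply]

section Graded

attribute [local instance] MvPolynomial.gradedAlgebra in
lemma homogeneousComponent_mul_of_isHomogeneous {R ι : Type*} [CommSemiring R]
    (c : MvPolynomial ι R) {g : MvPolynomial ι R} {d : ℕ} (hg : g.IsHomogeneous d) (n : ℕ) :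
    homogeneousComponent n (c * g) = if d ≤ n then homogeneousComponent (n - d) c * g else 0 := by
  have hmem : g ∈ homogeneousSubmodule ι R d := hg
  simp only [← decomposition.decompose'_apply]
  split_ifs with h
  · exact DirectSum.coe_decompose_mul_of_right_mem_of_le _ hmem h
  · exact DirectSum.coe_decompose_mul_of_right_mem_of_not_le _ hmem h

lemma homogeneousComponent_mul_mem_span_totalDegree_lt_of_isHomogeneous {R ι : Type*}
    [CommSemiring R] {A : Subalgebra R (MvPolynomial ι R)} (c : MvPolynomial ι R)
    {g : MvPolynomial ι R} (hgA : g ∈ A) {d : ℕ} (hd : 0 < d) (hg : g.IsHomogeneous d) (n : ℕ) :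
    homogeneousComponent n (c * g) ∈ Submodule.span A {h | h.totalDegree < n} := by
  rw [homogeneousComponent_mul_of_isHomogeneous c hg]
  split_ifs with hdn
  · rw [mul_comm]
    exact Submodule.smul_mem _ (⟨g, hgA⟩ : A) <| Submodule.subset_span <|
      (homogeneousComponent_isHomogeneous _ c).totalDegree_le.trans_lt (by omega)
  · exact zero_mem _

variable {k : Type*} [Field k] {ι : Type*} {A : Subalgebra k (MvPolynomial ι k)}

lemma IsGradedSubalgebra.homogeneousComponent_mul_mem_span_totalDegree_lt
    (hA : IsGradedSubalgebra A) (c : MvPolynomial ι k) {g : MvPolynomial ι k} (hgA : g ∈ A)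
    (hg₀ : constantCoeff g = 0) (n : ℕ) :
    homogeneousComponent n (c * g) ∈ Submodule.span A {h | h.totalDegree < n} := by
  rw [← sum_homogeneousComponent g, Finset.mul_sum, map_sum]
  refine sum_mem fun d _ => ?_
  rcases Nat.eq_zero_or_pos d with rfl | hd
  · simp [homogeneousComponent_zero, ← constantCoeff_eq, hg₀]
  · exact homogeneousComponent_mul_mem_span_totalDegree_lt_of_isHomogeneous c (hA g hgA d) hd
      (homogeneousComponent_isHomogeneous d g) n

lemma IsGradedSubalgebra.homogeneousComponent_mem_span_totalDegree_lt
    (hA : IsGradedSubalgebra A) {x : MvPolynomial ι k}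
    (hx : x ∈ Ideal.span {g | g ∈ A ∧ constantCoeff g = 0}) (n : ℕ) :
    homogeneousComponent n x ∈ Submodule.span A {h | h.totalDegree < n} := by
  -- Generalized over a multiplier `c` so that the `smul` case of the span induction goes through.
  suffices ∀ c, homogeneousComponent n (c * x) ∈ Submodule.span A {h | h.totalDegree < n} by
    simpa using this 1
  induction hx using Submodule.span_induction with
  | mem g hg => exact fun c => hA.homogeneousComponent_mul_mem_span_totalDegree_lt c hg.1 hg.2 n
  | zero => simp
  | add x y _ _ hx hy => exact fun c => by rw [mul_add, map_add]; exact add_mem (hx c) (hy c)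
  | smul a x _ hx => exact fun c => by rw [smul_eq_mul, ← mul_assoc]; exact hx (c * a)

lemma IsGradedSubalgebra.X_pow_mem_span_totalDegree_lt (hA : IsGradedSubalgebra A) {i : ι}
    {m : ℕ} (hm : (X i : MvPolynomial ι k) ^ m ∈ Ideal.span {g | g ∈ A ∧ constantCoeff g = 0}) :
    (X i : MvPolynomial ι k) ^ m ∈ Submodule.span A {h | h.totalDegree < m} := by
  have h := hA.homogeneousComponent_mem_span_totalDegree_lt hm m
  rwa [homogeneousComponent_eq_self (isHomogeneous_X_pow i m)] at h

end Graded

section Finite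

variable {R : Type*} [CommSemiring R] {ι : Type*}

lemma mem_of_forall_monomial_one_mem {M : Submodule R (MvPolynomial ι R)}
    {p : MvPolynomial ι R} (h : ∀ e ∈ p.support, monomial e (1 : R) ∈ M) : p ∈ M := by
  rw [p.as_sum]
  refine sum_mem fun e he => ?_
  simpa [smul_monomial] using M.smul_mem (coeff e p) (h e he)

variable {A : Subalgebra R (MvPolynomial ι R)}

lemma span_monomial_one_eq_top_of_X_pow_mem_span (m : ι → ℕ)
    (hm : ∀ i, (X i : MvPolynomial ι R) ^ m i ∈ Submodule.span A {h | h.totalDegree < m i}) :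
    Submodule.span A ((monomial · (1 : R)) '' {e | ∀ i, e i < m i}) = ⊤ := by
  set N := Submodule.span A ((monomial · (1 : R)) '' {e | ∀ i, e i < m i})
  suffices ∀ n p, totalDegree p < n → p ∈ N from
    eq_top_iff.2 fun p _ => this _ p (Nat.lt_succ_self _)
  intro n
  induction n with
  | zero => simp
  | succ n ih =>
    intro p hp
    refine mem_of_forall_monomial_one_mem (M := N.restrictScalars R) fun e he => ?_
    by_cases hbox : ∀ i, e i < m i
    · exact Submodule.subset_span ⟨e, hbox, rfl⟩
    obtain ⟨i, hi⟩ : ∃ i, m i ≤ e i := by simpa using hbox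
    obtain ⟨e, rfl⟩ : ∃ e', e = e' + Finsupp.single i (m i) :=
      ⟨_, (tsub_add_cancel_of_le (Finsupp.single_le_iff.2 hi)).symm⟩
    have hdeg : Finsupp.degree (e + Finsupp.single i (m i)) ≤ totalDegree p := le_totalDegree he
    rw [map_add, Finsupp.degree_single] at hdeg
    rw [← mul_one (1 : R), ← monomial_mul, ← X_pow_eq_monomial]
    refine (Submodule.span_le (p := N.comap (LinearMap.mulLeft A (monomial e 1)))).2
      (fun q hq => ih _ ?_) (hm i)
    have hq : totalDegree q < m i := hq
    have := totalDegree_mul (monomial e (1 : R)) q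
    have : (monomial e (1 : R)).totalDegree ≤ Finsupp.degree e := totalDegree_monomial_le e 1
    simp only [LinearMap.mulLeft_apply]
    omega

lemma finite_of_X_pow_mem_span [Finite ι] (m : ι → ℕ)
    (hm : ∀ i, (X i : MvPolynomial ι R) ^ m i ∈ Submodule.span A {h | h.totalDegree < m i}) :
    Module.Finite A (MvPolynomial ι R) := by
  classical
  have hbox : {e : ι →₀ ℕ | ∀ i, e i < m i}.Finite :=
    (Set.finite_Iic (Finsupp.equivFunOnFinite.symm m)).subset fun e he i => by
      simpa using (he i).le
  exact Module.finite_def.2 <| Submodule.fg_def.2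
    ⟨_, hbox.image _, span_monomial_one_eq_top_of_X_pow_mem_span m hm⟩

end Finite

lemma Subalgebra.fg_of_finite {R B : Type*} [CommRing R] [IsNoetherianRing R] [CommRing B]
    [Algebra R B] [Algebra.FiniteType R B] (A : Subalgebra R B) [Module.Finite A B] : A.FG := by
  rw [← Subalgebra.fg_top]
  exact fg_of_fg_of_fg R A B Algebra.FiniteType.out Module.Finite.fg_top Subtype.val_injective

/-- If `A ⊆ k[V]^G` is a graded geometric separating algebra for a
finite group `G`, then the extension `A ⊆ k[V]^G` is integral and `A` is a finitely
generated `k`-algebra. -/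
theorem separating_algebra_integral_and_finitelyGenerated
    {k : Type*} [Field k] {G : Type*} [Group G] [Finite G]
    {ι : Type*} [Fintype ι] [DecidableEq ι]
    (ρ : Representation k G (ι → k)) (A : Subalgebra k (MvPolynomial ι k))
    (hgraded : IsGradedSubalgebra A) (hsep : IsGeomSeparatingAlgebra ρ A) :
    (∀ f ∈ invariantRing ρ, (algebraMap A (MvPolynomial ι k)).IsIntegralElem f) ∧ A.FG := by
  have hnull : zeroLocus (AlgebraicClosure k)
      (Ideal.span {g | g ∈ A ∧ constantCoeff g = 0}) ⊆ {0} := fun u hu =>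
    hsep.eq_zero_of_forall_aeval_eq_zero fun g hgA hg₀ => hu g (Ideal.subset_span ⟨hgA, hg₀⟩)
  choose m hm using exists_pow_X_mem_of_zeroLocus_subset_zero hnull
  have : Module.Finite A (MvPolynomial ι k) :=
    finite_of_X_pow_mem_span m fun i => hgraded.X_pow_mem_span_totalDegree_lt (hm i)
  exact ⟨fun f _ => IsIntegral.of_finite A f, A.fg_of_finite⟩
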